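/- (Model-mismatch bound with arbitrary initial conditions.) In the setting of Lemma 5 (block lower triangular Φ = [Φ_x; Φ_u] satisfying the nominal SLS constraint, model error Δℳ, R_Φ = (I + ΦZΔℳ)⁻¹, data (x^i, u^i) with w^i, ŵ^i, and shift vectors x̃₀^i defined as there), the following hold: (a) for each i, Φ(ŵ^i + x̃₀^i) − R_Φ Φ (w^i + x̃₀^i) = R_Φ Φ Z Δℳ (Φ(ŵ^i + x̃₀^i) − [x^i; u^i]); and (b) consequently, the Wasserstein distance between the empirical predictive distribution P̂_pred = (1/N)Σ_i δ_{Φ(ŵ^i + x̃₀^i)} and the empirical closed-loop distribution P̄_cl = (1/N)Σ_i δ_{R_ΦΦ(w^i + x̃₀^i)} satisfies d_W(P̂_pred, P̄_cl) ≤ (1/N)Σ_{i=1}^N ‖R_Φ Φ Z Δℳ (Φ(ŵ^i + x̃₀^i) − [x^i; u^i])‖. -/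

import Mathlib

/-!
Since `ŵⁱ` and `wⁱ` differ only through the model error, `wⁱ = ŵⁱ + Z Δℳ [xⁱ; uⁱ]`, and with
`R = (1 + Φ Z Δℳ)⁻¹` the identity `R Φ Z Δℳ = 1 - R` gives (a), whatever the shifts `x̃₀ⁱ` are.
The inverse is a genuine one: by Weinstein–Aronszajn `det (1 + Φ Z Δℳ) = det (1 + Z Δℳ Φ)`, and
`Z Δℳ Φ` is strictly block lower triangular (`Z` shifts time forward, `Δℳ` is block diagonal,
`Φ` is causal), so this determinant is `1`. For (b), coupling the two empirical measures atom by
atom bounds the Wasserstein distance by the average of the ℓ¹-distances between the atoms.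
-/

open MeasureTheory Matrix
open scoped ENNReal

/-- The ℓ¹-norm of a vector. -/
noncomputable def l1norm {ι : Type*} [Fintype ι] (v : ι → ℝ) : ℝ := ∑ i, |v i|

/-- The induced ℓ¹-norm of a matrix (maximum absolute column sum). -/
noncomputable def matL1 {ι κ : Type*} [Fintype ι] [Fintype κ] (M : Matrix ι κ ℝ) : ℝ :=
  ⨆ j, ∑ i, |M i j|

/-- The Wasserstein-1 distance (w.r.t. the ℓ¹-norm): infimum over couplings of the expected
ℓ¹-distance. -/
noncomputable def wass {ι : Type*} [Fintype ι] (P Q : Measure (ι → ℝ)) : ℝ :=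
  sInf { r | ∃ π : Measure ((ι → ℝ) × (ι → ℝ)),
    IsProbabilityMeasure π ∧ π.map Prod.fst = P ∧ π.map Prod.snd = Q ∧
    r = ∫ p, l1norm (p.1 - p.2) ∂π }

/-- The uniform empirical measure `(1/N) ∑ᵢ δ_{a i}`. -/
noncomputable def emp {ι : Type*} [Fintype ι] {N : ℕ} (a : Fin N → (ι → ℝ)) :
    Measure (ι → ℝ) :=
  (N : ℝ≥0∞)⁻¹ • ∑ i, Measure.dirac (a i)

/-- The block-downshift matrix `Z`, with `n × n` identity blocks on the first block
subdiagonal and zero blocks elsewhere. -/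
noncomputable def dshift (T n : ℕ) : Matrix (Fin (T+1) × Fin n) (Fin (T+1) × Fin n) ℝ :=
  fun p q => if (p.1 : ℕ) = (q.1 : ℕ) + 1 ∧ p.2 = q.2 then 1 else 0

/-- `blkdiag T M`: block-diagonal matrix with `T+1` copies of `M` on the diagonal. -/
noncomputable def blkdiag (T : ℕ) {n m : ℕ} (M : Matrix (Fin n) (Fin m) ℝ) :
    Matrix (Fin (T+1) × Fin n) (Fin (T+1) × Fin m) ℝ :=
  fun p q => if p.1 = q.1 then M p.2 q.2 else 0

/-- A block-partitioned matrix is block lower triangular: all blocks strictly above the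
block diagonal are zero. -/
def BlockLT {T n m : ℕ} (M : Matrix (Fin (T+1) × Fin m) (Fin (T+1) × Fin n) ℝ) : Prop :=
  ∀ p q, p.1 < q.1 → M p q = 0

section Triangular

variable {R α : Type*} [CommRing R] [LinearOrder α]

theorem Matrix.mul_apply_eq_zero_of_le {l k o : Type*} [Fintype k]
    {tl : l → α} {tk : k → α} {tm : o → α} {A : Matrix l k R} {B : Matrix k o R}
    (hA : ∀ i r, tl i ≤ tk r → A i r = 0) (hB : ∀ r j, tk r < tm j → B r j = 0)
    (i : l) (j : o) (hij : tl i ≤ tm j) : (A * B) i j = 0 := by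
  rw [mul_apply]
  refine Finset.sum_eq_zero fun r _ => ?_
  rcases le_or_gt (tl i) (tk r) with h | h
  · rw [hA i r h, zero_mul]
  · rw [hB r j (h.trans_le hij), mul_zero]

theorem Matrix.det_one_add_eq_one_of_le {m : Type*} [Fintype m] [DecidableEq m] (b : m → α)
    {S : Matrix m m R} (hS : ∀ i j, b i ≤ b j → S i j = 0) : (1 + S).det = 1 := by
  have hlower : BlockTriangular (1 + S) (OrderDual.toDual ∘ b) :=
    blockTriangular_one.add fun i j h => hS i j h.le
  rw [hlower.det]
  refine Finset.prod_eq_one fun k _ => ?_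
  suffices h : (1 + S).toSquareBlock (OrderDual.toDual ∘ b) k = 1 by rw [h, det_one]
  ext i j
  have hij : b i ≤ b j := (OrderDual.toDual.injective (i.2.trans j.2.symm)).le
  simp [toSquareBlock_def, hS i j hij, one_apply, Subtype.ext_iff]

end Triangular

section MismatchIdentity

variable {R ι κ : Type*} [CommRing R] [Fintype ι] [DecidableEq ι] [Fintype κ]

theorem Matrix.inv_one_add_mul_mul_eq_one_sub {M : Matrix ι ι R} (h : IsUnit (1 + M).det) :
    (1 + M)⁻¹ * M = 1 - (1 + M)⁻¹ := by
  have hinv : (1 + M)⁻¹ * (1 + M) = 1 := nonsing_inv_mul _ h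
  rw [mul_add, mul_one] at hinv
  exact eq_sub_of_add_eq' hinv

theorem Matrix.mulVec_sub_inv_mul_mulVec_add (Φ : Matrix ι κ R) (D : Matrix κ ι R)
    (h : IsUnit (1 + Φ * D).det) (v : κ → R) (ξ : ι → R) :
    Φ *ᵥ v - ((1 + Φ * D)⁻¹ * Φ) *ᵥ (v + D *ᵥ ξ)
      = ((1 + Φ * D)⁻¹ * Φ * D) *ᵥ (Φ *ᵥ v - ξ) := by
  have hRΦD : (1 + Φ * D)⁻¹ * Φ * D = 1 - (1 + Φ * D)⁻¹ := by
    rw [Matrix.mul_assoc, inv_one_add_mul_mul_eq_one_sub h]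
  rw [hRΦD, mulVec_add, ← mulVec_mulVec, mulVec_mulVec ξ, hRΦD]
  simp only [sub_mulVec, one_mulVec, mulVec_sub]
  abel

end MismatchIdentity

theorem Matrix.sub_mulVec_sub_mulVec_eq_add {R κ ι ι' : Type*} [CommRing R] [Fintype ι]
    [Fintype ι'] (P P' : Matrix κ ι R) (Q Q' : Matrix κ ι' R) (x : κ → R) (y : ι → R)
    (z : ι' → R) :
    x - P *ᵥ y - Q *ᵥ z
      = (x - P' *ᵥ y - Q' *ᵥ z) + fromCols (P' - P) (Q' - Q) *ᵥ Sum.elim y z := by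
  rw [fromCols_mulVec_sumElim, sub_mulVec, sub_mulVec]
  abel

section Wasserstein

open Finset

lemma l1norm_nonneg {ι : Type*} [Fintype ι] (v : ι → ℝ) : 0 ≤ l1norm v :=
  sum_nonneg fun _ _ => abs_nonneg _

theorem MeasureTheory.Measure.map_smul_sum_dirac {α β ι : Type*} [MeasurableSpace α]
    [MeasurableSpace β] {f : α → β} (hf : Measurable f) (c : ℝ≥0∞) (s : Finset ι) (a : ι → α) :
    (c • ∑ i ∈ s, dirac (a i)).map f = c • ∑ i ∈ s, dirac (f (a i)) := by
  rw [Measure.map_smul, ← Measure.mapₗ_apply_of_measurable hf, _root_.map_sum]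
  simp only [Measure.mapₗ_apply_of_measurable hf, Measure.map_dirac' hf]

theorem wass_emp_le {ι : Type*} [Fintype ι] {N : ℕ} (hN : 0 < N) (a b : Fin N → ι → ℝ) :
    wass (emp a) (emp b) ≤ (N : ℝ)⁻¹ * ∑ i, l1norm (a i - b i) := by
  set π : Measure ((ι → ℝ) × (ι → ℝ)) := (N : ℝ≥0∞)⁻¹ • ∑ i, Measure.dirac (a i, b i)
  have hπ : IsProbabilityMeasure π := by
    have hN' : (N : ℝ≥0∞) ≠ 0 := Nat.cast_ne_zero.2 hN.ne'
    constructor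
    simp [π, ENNReal.inv_mul_cancel hN' (ENNReal.natCast_ne_top N)]
  have hcost : ∫ p, l1norm (p.1 - p.2) ∂π = (N : ℝ)⁻¹ * ∑ i, l1norm (a i - b i) := by
    rw [integral_smul_measure, integral_finsetSum_measure fun i _ => integrable_dirac enorm_lt_top]
    simp [integral_dirac]
  refine csInf_le ⟨0, ?_⟩ ⟨π, hπ, ?_, ?_, hcost.symm⟩
  · rintro r ⟨ρ, -, -, -, rfl⟩
    exact integral_nonneg fun p => l1norm_nonneg _
  · exact Measure.map_smul_sum_dirac measurable_fst _ _ _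
  · exact Measure.map_smul_sum_dirac measurable_snd _ _ _

end Wasserstein

section SystemLevelSynthesis

variable {T n m : ℕ}

lemma blkdiag_sub {k : ℕ} (P Q : Matrix (Fin n) (Fin k) ℝ) :
    blkdiag T (P - Q) = blkdiag T P - blkdiag T Q := by
  ext p q
  by_cases h : p.1 = q.1 <;> simp [blkdiag, h]

lemma dshift_apply_eq_zero {p q : Fin (T+1) × Fin n} (h : p.1 ≤ q.1) : dshift T n p q = 0 := by
  rw [dshift, if_neg]
  rintro ⟨hpq, -⟩
  have := Fin.le_def.1 h
  omega

lemma fromCols_blkdiag_apply_eq_zero (P : Matrix (Fin n) (Fin n) ℝ) (Q : Matrix (Fin n) (Fin m) ℝ)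
    (p : Fin (T+1) × Fin n) (s : (Fin (T+1) × Fin n) ⊕ (Fin (T+1) × Fin m))
    (h : p.1 < Sum.elim Prod.fst Prod.fst s) : fromCols (blkdiag T P) (blkdiag T Q) p s = 0 := by
  cases s <;> exact if_neg h.ne

lemma fromRows_apply_eq_zero_of_blockLT {Φx : Matrix (Fin (T+1) × Fin n) (Fin (T+1) × Fin n) ℝ}
    {Φu : Matrix (Fin (T+1) × Fin m) (Fin (T+1) × Fin n) ℝ} (hx : BlockLT Φx) (hu : BlockLT Φu)
    (s : (Fin (T+1) × Fin n) ⊕ (Fin (T+1) × Fin m)) (q : Fin (T+1) × Fin n)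
    (h : Sum.elim Prod.fst Prod.fst s < q.1) : fromRows Φx Φu s q = 0 := by
  cases s
  exacts [hx _ _ h, hu _ _ h]

theorem isUnit_det_one_add_fromRows_mul_dshift_mul_fromCols
    {Φx : Matrix (Fin (T+1) × Fin n) (Fin (T+1) × Fin n) ℝ}
    {Φu : Matrix (Fin (T+1) × Fin m) (Fin (T+1) × Fin n) ℝ} (hx : BlockLT Φx) (hu : BlockLT Φu)
    (P : Matrix (Fin n) (Fin n) ℝ) (Q : Matrix (Fin n) (Fin m) ℝ) :
    IsUnit (1 + fromRows Φx Φu * dshift T n * fromCols (blkdiag T P) (blkdiag T Q)).det := by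
  have hZΔ : ∀ p s, p.1 ≤ Sum.elim Prod.fst Prod.fst s →
      (dshift T n * fromCols (blkdiag T P) (blkdiag T Q)) p s = 0 :=
    mul_apply_eq_zero_of_le (tk := Prod.fst) (fun _ _ => dshift_apply_eq_zero)
      (fromCols_blkdiag_apply_eq_zero P Q)
  have hZΔΦ := mul_apply_eq_zero_of_le hZΔ (fromRows_apply_eq_zero_of_blockLT hx hu)
  rw [Matrix.mul_assoc, det_one_add_mul_comm, det_one_add_eq_one_of_le Prod.fst hZΔΦ]
  exact isUnit_one

end SystemLevelSynthesis

theorem stmt19_general {n m T N : ℕ} (hN : 0 < N)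
    (Ahat A : Matrix (Fin n) (Fin n) ℝ) (Bhat B : Matrix (Fin n) (Fin m) ℝ)
    (Φx : Matrix (Fin (T+1) × Fin n) (Fin (T+1) × Fin n) ℝ)
    (Φu : Matrix (Fin (T+1) × Fin m) (Fin (T+1) × Fin n) ℝ)
    (hx : BlockLT Φx) (hu : BlockLT Φu)
    (Φ : Matrix ((Fin (T+1) × Fin n) ⊕ (Fin (T+1) × Fin m)) (Fin (T+1) × Fin n) ℝ)
    (hΦ : Φ = Matrix.fromRows Φx Φu)
    (ΔM : Matrix (Fin (T+1) × Fin n) ((Fin (T+1) × Fin n) ⊕ (Fin (T+1) × Fin m)) ℝ)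
    (hΔM : ΔM = Matrix.fromCols (blkdiag T (Ahat - A)) (blkdiag T (Bhat - B)))
    (RΦ : Matrix ((Fin (T+1) × Fin n) ⊕ (Fin (T+1) × Fin m))
                 ((Fin (T+1) × Fin n) ⊕ (Fin (T+1) × Fin m)) ℝ)
    (hR : RΦ = (1 + Φ * dshift T n * ΔM)⁻¹)
    (x : Fin N → (Fin (T+1) × Fin n) → ℝ) (u : Fin N → (Fin (T+1) × Fin m) → ℝ)
    (w what : Fin N → (Fin (T+1) × Fin n) → ℝ)
    (hw : ∀ i, w i = x i - (dshift T n * blkdiag T A) *ᵥ x i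
        - (dshift T n * blkdiag T B) *ᵥ u i)
    (hwhat : ∀ i, what i = x i - (dshift T n * blkdiag T Ahat) *ᵥ x i
        - (dshift T n * blkdiag T Bhat) *ᵥ u i)
    (xt : Fin N → (Fin (T+1) × Fin n) → ℝ) :
    (∀ i, Φ *ᵥ (what i + xt i) - (RΦ * Φ) *ᵥ (w i + xt i)
        = (RΦ * Φ * dshift T n * ΔM) *ᵥ (Φ *ᵥ (what i + xt i) - Sum.elim (x i) (u i))) ∧
    wass (emp (fun i => Φ *ᵥ (what i + xt i)))
        (emp (fun i => (RΦ * Φ) *ᵥ (w i + xt i)))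
      ≤ (N : ℝ)⁻¹ * ∑ i, l1norm
          ((RΦ * Φ * dshift T n * ΔM) *ᵥ (Φ *ᵥ (what i + xt i) - Sum.elim (x i) (u i))) := by
  have hunit : IsUnit (1 + Φ * (dshift T n * ΔM)).det := by
    rw [← Matrix.mul_assoc, hΦ, hΔM]
    exact isUnit_det_one_add_fromRows_mul_dshift_mul_fromCols hx hu _ _
  have hw_eq : ∀ i, w i = what i + (dshift T n * ΔM) *ᵥ Sum.elim (x i) (u i) := fun i => by
    rw [hw i, hwhat i, hΔM, blkdiag_sub, blkdiag_sub, Matrix.mul_fromCols,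
      Matrix.mul_sub, Matrix.mul_sub, sub_mulVec_sub_mulVec_eq_add]
  have hmismatch : ∀ i, Φ *ᵥ (what i + xt i) - (RΦ * Φ) *ᵥ (w i + xt i)
      = (RΦ * Φ * dshift T n * ΔM) *ᵥ (Φ *ᵥ (what i + xt i) - Sum.elim (x i) (u i)) := fun i => by
    rw [hw_eq i, add_right_comm, hR]
    simpa only [Matrix.mul_assoc] using mulVec_sub_inv_mul_mulVec_add Φ _ hunit _ _
  refine ⟨hmismatch, (wass_emp_le hN _ _).trans_eq ?_⟩
  simp only [hmismatch]

/-- **Model-mismatch bound with arbitrary initial conditions.**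
(a) `Φ(ŵⁱ + x̃₀ⁱ) − R_Φ Φ (wⁱ + x̃₀ⁱ) = R_Φ Φ Z Δℳ (Φ(ŵⁱ + x̃₀ⁱ) − [xⁱ; uⁱ])`; and
(b) the Wasserstein distance between the empirical predictive and empirical closed-loop
distributions is bounded by the average ℓ¹-norm of these mismatch terms. -/
theorem stmt19 {n m T N : ℕ} (hn : 0 < n) (hm : 0 < m) (hT : 0 < T) (hN : 0 < N)
    (Ahat A : Matrix (Fin n) (Fin n) ℝ) (Bhat B : Matrix (Fin n) (Fin m) ℝ)
    (Φx : Matrix (Fin (T+1) × Fin n) (Fin (T+1) × Fin n) ℝ)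
    (Φu : Matrix (Fin (T+1) × Fin m) (Fin (T+1) × Fin n) ℝ)
    (hx : BlockLT Φx) (hu : BlockLT Φu)
    (hSLS : (1 - dshift T n * blkdiag T Ahat) * Φx - dshift T n * blkdiag T Bhat * Φu = 1)
    (Φ : Matrix ((Fin (T+1) × Fin n) ⊕ (Fin (T+1) × Fin m)) (Fin (T+1) × Fin n) ℝ)
    (hΦ : Φ = Matrix.fromRows Φx Φu)
    (ΔM : Matrix (Fin (T+1) × Fin n) ((Fin (T+1) × Fin n) ⊕ (Fin (T+1) × Fin m)) ℝ)
    (hΔM : ΔM = Matrix.fromCols (blkdiag T (Ahat - A)) (blkdiag T (Bhat - B)))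
    (RΦ : Matrix ((Fin (T+1) × Fin n) ⊕ (Fin (T+1) × Fin m))
                 ((Fin (T+1) × Fin n) ⊕ (Fin (T+1) × Fin m)) ℝ)
    (hR : RΦ = (1 + Φ * dshift T n * ΔM)⁻¹)
    (x0 : Fin n → ℝ)
    (x : Fin N → (Fin (T+1) × Fin n) → ℝ) (u : Fin N → (Fin (T+1) × Fin m) → ℝ)
    (w what : Fin N → (Fin (T+1) × Fin n) → ℝ)
    (hw : ∀ i, w i = x i - (dshift T n * blkdiag T A) *ᵥ x i
        - (dshift T n * blkdiag T B) *ᵥ u i)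
    (hwhat : ∀ i, what i = x i - (dshift T n * blkdiag T Ahat) *ᵥ x i
        - (dshift T n * blkdiag T Bhat) *ᵥ u i)
    (xt : Fin N → (Fin (T+1) × Fin n) → ℝ)
    (hxt : ∀ i p, xt i p = if p.1 = 0 then x0 p.2 - x i (0, p.2) else 0) :
    (∀ i, Φ *ᵥ (what i + xt i) - (RΦ * Φ) *ᵥ (w i + xt i)
        = (RΦ * Φ * dshift T n * ΔM) *ᵥ (Φ *ᵥ (what i + xt i) - Sum.elim (x i) (u i))) ∧
    wass (emp (fun i => Φ *ᵥ (what i + xt i)))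
        (emp (fun i => (RΦ * Φ) *ᵥ (w i + xt i)))
      ≤ (N : ℝ)⁻¹ * ∑ i, l1norm
          ((RΦ * Φ * dshift T n * ΔM) *ᵥ (Φ *ᵥ (what i + xt i) - Sum.elim (x i) (u i))) :=
  stmt19_general hN Ahat A Bhat B Φx Φu hx hu Φ hΦ ΔM hΔM RΦ hR x u w what hw hwhat xt
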